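/- Let A be a unital C*-algebra and let S ⊂ A be an operator system. Let π : A → B(H) be a unital *-representation and let Π : A → B(H) be a unital completely positive map which agrees with π on S. Let ψ be a state on A which admits a characteristic sequence (Δ_n) with Δ_n ∈ S for all n, and let (σ_ψ, H_ψ, ξ_ψ) be a GNS triple for ψ. Then for every a ∈ A, limsup_{n→∞} ‖(Π(a) − π(a)) π(Δ_n)‖ ≤ 2 · dist(σ_ψ(a), σ_ψ(S)) = 2 · inf{‖σ_ψ(a − s)‖ : s ∈ S}. -/

import Mathlib

/-!
Fix `s ∈ S` and put `b = a - s`. As `Φ = π` on `S`, `(Φ a - π a) π(Δₙ) = Φ(b) π(Δₙ) - π(b) π(Δₙ)`,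
and it suffices to bound the limsup of each term by `‖σ(b) ξ‖ = ψ(b⋆b)^{1/2} ≤ ‖σ(a - s)‖`.
For `π` this is the defining property of a characteristic sequence, as
`‖b Δₙ‖² = ‖Δₙ⋆ b⋆b Δₙ‖`. For `Φ`, the Kadison–Schwarz inequality bounds `‖Φ(b) v‖` by the GNS
seminorm of `b` for the vector functional `x ↦ ⟪v, Φ(x) v⟫`. Splitting `b = b Δₘ + b (1 - Δₘ)` in
that seminorm and using `Φ(Δₘ) = π(Δₘ)` gives
`‖Φ(b) π(Δₙ)‖ ≤ ‖b Δₘ‖ + ‖b‖ (2 ‖(1 - Δₘ) Δₙ‖)^{1/2}`. Since `ψ(Δₘ) → 1`, the vector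
`σ(1 - Δₘ) ξ` is small for large `m`, and then the characteristic sequence makes both terms
small for large `n`.
-/

open Filter Topology
open scoped ComplexOrder InnerProductSpace

/-- A state on a unital C⋆-algebra: a positive linear functional of norm one. -/
def IsState {A : Type*} [CStarAlgebra A] (φ : A →L[ℂ] ℂ) : Prop :=
  ‖φ‖ = 1 ∧ ∀ a : A, 0 ≤ φ (star a * a)

/-- A characteristic sequence for a state `ψ`: a sequence of norm-one elements with
`ψ (Δ n) → 1` and `limsup ‖Δ n⋆ * a * Δ n‖ ≤ |ψ a|` for every `a`. -/
def IsCharacteristicSequence {A : Type*} [CStarAlgebra A] (ψ : A →L[ℂ] ℂ) (Δ : ℕ → A) : Prop :=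
  (∀ n, ‖Δ n‖ = 1) ∧ Tendsto (fun n => ψ (Δ n)) atTop (nhds 1) ∧
    ∀ a : A, limsup (fun n => ‖star (Δ n) * a * Δ n‖) atTop ≤ ‖ψ a‖

/-- A unital completely positive map from `A` to `B(H)`: it is unital, and for every `n`,
the induced map on `n × n` matrices sends positive matrices (those of the form `Nᴴ * N`)
to positive operators on the `n`-fold Hilbert space direct sum of `H`. -/
def IsUCP {A : Type*} [CStarAlgebra A] {H : Type*} [NormedAddCommGroup H]
    [InnerProductSpace ℂ H] (Φ : A →L[ℂ] (H →L[ℂ] H)) : Prop :=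
  Φ 1 = 1 ∧ ∀ (n : ℕ) (M : Matrix (Fin n) (Fin n) A),
    (∃ N : Matrix (Fin n) (Fin n) A, M = N.conjTranspose * N) →
    ∀ ξ : Fin n → H, 0 ≤ ∑ i, ∑ j, ⟪ξ i, Φ (M i j) (ξ j)⟫_ℂ

namespace PositiveLinearMap

variable {A : Type*} [CStarAlgebra A] [PartialOrder A] [StarOrderedRing A]

theorem norm_toPreGNS_mul_le (f : A →ₚ[ℂ] ℂ) (a x : A) :
    ‖f.toPreGNS (a * x)‖ ≤ ‖a‖ * ‖f.toPreGNS x‖ := by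
  have hle : ‖f.leftMulMapPreGNS a‖ ≤ ‖a‖ := LinearMap.mkContinuous_norm_le _ (norm_nonneg a) _
  exact (f.leftMulMapPreGNS a).le_of_opNorm_le hle (f.toPreGNS x)

theorem norm_toPreGNS_le (f : A →ₚ[ℂ] ℂ) (x : A) :
    ‖f.toPreGNS x‖ ≤ ‖x‖ * ‖f.toPreGNS 1‖ := by
  simpa using f.norm_toPreGNS_mul_le x 1

end PositiveLinearMap

section UCP

attribute [local instance] CStarAlgebra.spectralOrder CStarAlgebra.spectralOrderedRing

variable {A : Type*} [CStarAlgebra A] {H : Type*} [NormedAddCommGroup H] [InnerProductSpace ℂ H]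
  {Φ : A →L[ℂ] (H →L[ℂ] H)}

namespace IsUCP

theorem inner_two_nonneg (hΦ : IsUCP Φ) (x y : A) (h k : H) :
    0 ≤ ⟪h, Φ (star x * x) h⟫_ℂ + ⟪h, Φ (star x * y) k⟫_ℂ
      + ⟪k, Φ (star y * x) h⟫_ℂ + ⟪k, Φ (star y * y) k⟫_ℂ := by
  let N : Matrix (Fin 2) (Fin 2) A := Matrix.of fun i j => if i = 0 then ![x, y] j else 0
  have hN : N.conjTranspose * N = Matrix.of fun i j => star (![x, y] i) * ![x, y] j := by
    ext i j
    simp [N, Matrix.mul_apply]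
  simpa [Fin.sum_univ_two, add_assoc] using hΦ.2 2 _ ⟨N, hN.symm⟩ ![h, k]

theorem inner_star_mul_self_nonneg (hΦ : IsUCP Φ) (x : A) (h : H) :
    0 ≤ ⟪h, Φ (star x * x) h⟫_ℂ := by
  simpa using hΦ.inner_two_nonneg x 0 h 0

noncomputable def vectorFunctional (hΦ : IsUCP Φ) (v : H) : A →ₚ[ℂ] ℂ :=
  .mk₀ (innerSL ℂ v ∘L ContinuousLinearMap.apply ℂ H v ∘L Φ).toLinearMap fun x hx => by
    obtain ⟨z, rfl⟩ := CStarAlgebra.nonneg_iff_eq_star_mul_self.mp hx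
    exact hΦ.inner_star_mul_self_nonneg z v

@[simp]
theorem vectorFunctional_apply (hΦ : IsUCP Φ) (v : H) (x : A) :
    hΦ.vectorFunctional v x = ⟪v, Φ x v⟫_ℂ := rfl

theorem norm_toPreGNS_sq (hΦ : IsUCP Φ) (v : H) (x : A) :
    (‖(hΦ.vectorFunctional v).toPreGNS x‖ ^ 2 : ℂ) = ⟪v, Φ (star x * x) v⟫_ℂ :=
  (hΦ.vectorFunctional v).preGNS_norm_sq _

theorem norm_toPreGNS_one (hΦ : IsUCP Φ) (v : H) :
    ‖(hΦ.vectorFunctional v).toPreGNS 1‖ = ‖v‖ := by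
  rw [PositiveLinearMap.preGNS_norm_def]
  simp [hΦ.1, ← Complex.ofReal_pow]

theorem norm_toPreGNS_one_sub_sq_le (hΦ : IsUCP Φ) {d : A} (hd : ‖d‖ ≤ 1) (v : H) :
    ‖(hΦ.vectorFunctional v).toPreGNS (1 - d)‖ ^ 2 ≤ 2 * (⟪v, v - Φ d v⟫_ℂ).re := by
  set f := hΦ.vectorFunctional v
  have hd' : ‖f.toPreGNS d‖ ≤ ‖v‖ := (f.norm_toPreGNS_le d).trans <| by
    rw [hΦ.norm_toPreGNS_one]; exact mul_le_of_le_one_left (norm_nonneg v) hd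
  have hinner : ⟪f.toPreGNS 1, f.toPreGNS d⟫_ℂ = ⟪v, Φ d v⟫_ℂ := by
    simp [PositiveLinearMap.preGNS_inner_def, f]
  have hv := inner_self_eq_norm_sq (𝕜 := ℂ) v
  rw [map_sub, norm_sub_sq (𝕜 := ℂ), hinner, hΦ.norm_toPreGNS_one, inner_sub_right,
    Complex.sub_re]
  simp only [RCLike.re_to_complex] at hv ⊢
  nlinarith [norm_nonneg (f.toPreGNS d)]

variable [CompleteSpace H]

-- over `ℂ` an operator is determined by its quadratic form
theorem map_star (hΦ : IsUCP Φ) (x : A) : Φ (star x) = star (Φ x) := by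
  refine ContinuousLinearMap.coe_injective ((ext_inner_map _ _).mp fun v => ?_)
  have := StarHomClass.map_star (hΦ.vectorFunctional v) x
  simp only [vectorFunctional_apply, Complex.star_def] at this
  rw [ContinuousLinearMap.coe_coe, ContinuousLinearMap.coe_coe,
    ContinuousLinearMap.star_eq_adjoint, ContinuousLinearMap.adjoint_inner_left,
    ← inner_conj_symm, this]
  simp

-- the Kadison–Schwarz inequality `Φ(b)⋆ Φ(b) ≤ Φ(b⋆ b)` at `v`, from 2-positivity on `(1, b)`
theorem norm_apply_le_norm_toPreGNS (hΦ : IsUCP Φ) (b : A) (v : H) :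
    ‖Φ b v‖ ≤ ‖(hΦ.vectorFunctional v).toPreGNS b‖ := by
  have key := hΦ.inner_two_nonneg 1 b (-Φ b v) v
  simp only [star_one, one_mul, mul_one, hΦ.map_star, hΦ.1, ← hΦ.norm_toPreGNS_sq,
    one_apply_eq_self, ContinuousLinearMap.star_eq_adjoint,
    ContinuousLinearMap.adjoint_inner_right, inner_neg_left, inner_neg_right, norm_neg,
    inner_self_eq_norm_sq_to_K] at key
  have := (Complex.le_def.mp key).1
  simp only [Complex.zero_re, Complex.add_re, Complex.neg_re, Complex.coe_algebraMap,
    ← Complex.ofReal_pow, Complex.ofReal_re] at this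
  exact (sq_le_sq₀ (norm_nonneg _) (norm_nonneg _)).mp (by linarith)

theorem norm_apply_le (hΦ : IsUCP Φ) {d : A} (hd : ‖d‖ ≤ 1) (b : A) (v : H) :
    ‖Φ b v‖ ≤ ‖b * d‖ * ‖v‖ + ‖b‖ * √(2 * (⟪v, v - Φ d v⟫_ℂ).re) := by
  set f := hΦ.vectorFunctional v
  calc ‖Φ b v‖ ≤ ‖f.toPreGNS b‖ := hΦ.norm_apply_le_norm_toPreGNS b v
    _ = ‖f.toPreGNS (b * d) + f.toPreGNS (b * (1 - d))‖ := by
      rw [← map_add, mul_sub, mul_one, add_sub_cancel]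
    _ ≤ ‖f.toPreGNS (b * d)‖ + ‖f.toPreGNS (b * (1 - d))‖ := norm_add_le _ _
    _ ≤ ‖b * d‖ * ‖v‖ + ‖b‖ * ‖f.toPreGNS (1 - d)‖ := by
      grw [f.norm_toPreGNS_le, hΦ.norm_toPreGNS_one, f.norm_toPreGNS_mul_le]
    _ ≤ ‖b * d‖ * ‖v‖ + ‖b‖ * √(2 * (⟪v, v - Φ d v⟫_ℂ).re) := by
      gcongr
      exact Real.le_sqrt_of_sq_le (hΦ.norm_toPreGNS_one_sub_sq_le hd v)

theorem norm_mul_map_le (hΦ : IsUCP Φ) (π : A →⋆ₐ[ℂ] (H →L[ℂ] H)) {d e : A} (hd : ‖d‖ ≤ 1)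
    (he : ‖e‖ ≤ 1) (hΦd : Φ d = π d) (b : A) :
    ‖Φ b * π e‖ ≤ ‖b * d‖ + ‖b‖ * √(2 * ‖(1 - d) * e‖) := by
  refine ContinuousLinearMap.opNorm_le_bound _ (by positivity) fun u => ?_
  set v := π e u
  have hv : ‖v‖ ≤ ‖u‖ := ((π e).le_opNorm u).trans <|
    mul_le_of_le_one_left (norm_nonneg u) ((NonUnitalStarAlgHom.norm_apply_le π e).trans he)
  have hsub : v - Φ d v = π ((1 - d) * e) u := by
    simp [v, hΦd, sub_mul]
  have hre : (⟪v, v - Φ d v⟫_ℂ).re ≤ ‖(1 - d) * e‖ * ‖u‖ ^ 2 := calc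
    (⟪v, v - Φ d v⟫_ℂ).re ≤ ‖v‖ * ‖π ((1 - d) * e) u‖ :=
      (Complex.re_le_norm _).trans (hsub ▸ norm_inner_le_norm v _)
    _ ≤ ‖u‖ * (‖(1 - d) * e‖ * ‖u‖) := by
      gcongr
      exact ((π _).le_opNorm u).trans (by gcongr; exact NonUnitalStarAlgHom.norm_apply_le π _)
    _ = ‖(1 - d) * e‖ * ‖u‖ ^ 2 := by ring
  calc ‖(Φ b * π e) u‖ = ‖Φ b v‖ := rfl
    _ ≤ ‖b * d‖ * ‖v‖ + ‖b‖ * √(2 * (⟪v, v - Φ d v⟫_ℂ).re) := hΦ.norm_apply_le hd b v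
    _ ≤ ‖b * d‖ * ‖u‖ + ‖b‖ * √((2 * ‖(1 - d) * e‖) * ‖u‖ ^ 2) := by
      have := Real.sqrt_le_sqrt (show 2 * (⟪v, v - Φ d v⟫_ℂ).re ≤ 2 * ‖(1 - d) * e‖ * ‖u‖ ^ 2 by
        linarith)
      gcongr
    _ = (‖b * d‖ + ‖b‖ * √(2 * ‖(1 - d) * e‖)) * ‖u‖ := by
      rw [Real.sqrt_mul (by positivity), Real.sqrt_sq (norm_nonneg u)]
      ring

end IsUCP

end UCP

section Characteristic

variable {A : Type*} [CStarAlgebra A] {ψ : A →L[ℂ] ℂ} {Δ : ℕ → A}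
  {K : Type*} [NormedAddCommGroup K] [InnerProductSpace ℂ K] [CompleteSpace K]
  {σ : A →⋆ₐ[ℂ] (K →L[ℂ] K)} {ξ : K}

theorem inner_apply_star_mul_self (x : A) :
    ⟪ξ, σ (star x * x) ξ⟫_ℂ = (‖σ x ξ‖ ^ 2 : ℝ) := by
  rw [map_mul, map_star, mul_apply_eq_comp, ContinuousLinearMap.star_eq_adjoint,
    ContinuousLinearMap.adjoint_inner_right, inner_self_eq_norm_sq_to_K]
  simp

namespace IsCharacteristicSequence

theorem eventually_norm_mul_lt (hΔ : IsCharacteristicSequence ψ Δ)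
    (hGNS : ∀ a, ψ a = ⟪ξ, σ a ξ⟫_ℂ) {x : A} {r : ℝ} (hr : ‖σ x ξ‖ < r) :
    ∀ᶠ n in atTop, ‖x * Δ n‖ < r := by
  have hr0 : 0 < r := (norm_nonneg _).trans_lt hr
  have hψ : ‖ψ (star x * x)‖ < r ^ 2 := by
    rw [hGNS, inner_apply_star_mul_self, Complex.norm_real, Real.norm_of_nonneg (by positivity)]
    gcongr
  have hbdd : IsBoundedUnder (· ≤ ·) atTop fun n => ‖star (Δ n) * (star x * x) * Δ n‖ :=
    isBoundedUnder_of ⟨‖star x * x‖, fun n => norm_mul₃_le.trans <| by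
      rw [norm_star, hΔ.1 n, one_mul, mul_one]⟩
  filter_upwards [eventually_lt_of_limsup_lt ((hΔ.2.2 _).trans_lt hψ) hbdd] with n hn
  rw [← sq_lt_sq₀ (norm_nonneg _) hr0.le, sq, ← CStarRing.norm_star_mul_self]
  simpa [mul_assoc] using hn

theorem tendsto_norm_apply_one_sub (hΔ : IsCharacteristicSequence ψ Δ)
    (hGNS : ∀ a, ψ a = ⟪ξ, σ a ξ⟫_ℂ) (hξ : ‖ξ‖ = 1) :
    Tendsto (fun m => ‖σ (1 - Δ m) ξ‖) atTop (𝓝 0) := by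
  have hbound : ∀ m, ‖σ (1 - Δ m) ξ‖ ≤ √(2 * (1 - (ψ (Δ m)).re)) := fun m => by
    have hΔm : ‖σ (Δ m) ξ‖ ≤ 1 := ((σ (Δ m)).le_opNorm ξ).trans <| by
      rw [hξ, mul_one, ← hΔ.1 m]; exact NonUnitalStarAlgHom.norm_apply_le σ _
    refine Real.le_sqrt_of_sq_le ?_
    rw [map_sub, map_one, sub_apply, one_apply_eq_self,
      norm_sub_sq (𝕜 := ℂ), hξ, ← hGNS, RCLike.re_to_complex]
    nlinarith [norm_nonneg (σ (Δ m) ξ)]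
  have hre : Tendsto (fun m => (ψ (Δ m)).re) atTop (𝓝 1) := by
    exact (Complex.continuous_re.tendsto 1).comp hΔ.2.1
  refine squeeze_zero (fun m => norm_nonneg _) hbound ?_
  simpa using ((tendsto_const_nhds (x := (1 : ℝ))).sub hre |>.const_mul 2).sqrt

variable {H : Type*} [NormedAddCommGroup H] [InnerProductSpace ℂ H] [CompleteSpace H]
  {Φ : A →L[ℂ] (H →L[ℂ] H)} {π : A →⋆ₐ[ℂ] (H →L[ℂ] H)}

theorem eventually_norm_ucp_mul_lt (hΔ : IsCharacteristicSequence ψ Δ)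
    (hGNS : ∀ a, ψ a = ⟪ξ, σ a ξ⟫_ℂ) (hξ : ‖ξ‖ = 1) (hΦ : IsUCP Φ)
    (hΦΔ : ∀ n, Φ (Δ n) = π (Δ n)) (b : A) {ε : ℝ} (hε : 0 < ε) :
    ∀ᶠ n in atTop, ‖Φ b * π (Δ n)‖ < ‖σ b ξ‖ + ε := by
  have hsmall : Tendsto (fun η => ‖b‖ * √(2 * η)) (𝓝[>] 0) (𝓝 0) := by
    have : Continuous fun η : ℝ => ‖b‖ * √(2 * η) := by fun_prop
    simpa using (this.tendsto 0).mono_left nhdsWithin_le_nhds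
  obtain ⟨η, hηb, hη⟩ :=
    ((hsmall.eventually (gt_mem_nhds (half_pos hε))).and self_mem_nhdsWithin).exists
  obtain ⟨m, hm, hmη⟩ := ((hΔ.eventually_norm_mul_lt hGNS
    (lt_add_of_pos_right ‖σ b ξ‖ (half_pos hε))).and
    ((hΔ.tendsto_norm_apply_one_sub hGNS hξ).eventually (gt_mem_nhds hη))).exists
  filter_upwards [hΔ.eventually_norm_mul_lt hGNS hmη] with n hn
  calc ‖Φ b * π (Δ n)‖ ≤ ‖b * Δ m‖ + ‖b‖ * √(2 * ‖(1 - Δ m) * Δ n‖) :=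
        hΦ.norm_mul_map_le π (hΔ.1 m).le (hΔ.1 n).le (hΦΔ m) b
    _ < (‖σ b ξ‖ + ε / 2) + ε / 2 := by
        refine add_lt_add_of_lt_of_le hm (le_trans ?_ hηb.le)
        gcongr
    _ = ‖σ b ξ‖ + ε := by ring

theorem limsup_norm_sub_mul_le (hΔ : IsCharacteristicSequence ψ Δ)
    (hGNS : ∀ a, ψ a = ⟪ξ, σ a ξ⟫_ℂ) (hξ : ‖ξ‖ = 1) (hΦ : IsUCP Φ)
    (hΦΔ : ∀ n, Φ (Δ n) = π (Δ n)) {a s : A} (hs : Φ s = π s) :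
    limsup (fun n => ‖(Φ a - π a) * π (Δ n)‖) atTop ≤ 2 * ‖σ (a - s) ξ‖ := by
  set b := a - s
  have hb : Φ a - π a = Φ b - π b := by simp [b, hs]
  refine le_of_forall_pos_le_add fun ε hε => limsup_le_of_le
    (isCoboundedUnder_le_of_le atTop fun n => norm_nonneg _) ?_
  filter_upwards [hΔ.eventually_norm_ucp_mul_lt hGNS hξ hΦ hΦΔ b (half_pos hε),
    hΔ.eventually_norm_mul_lt hGNS (lt_add_of_pos_right ‖σ b ξ‖ (half_pos hε))] with n hΦn hπn
  calc ‖(Φ a - π a) * π (Δ n)‖ ≤ ‖Φ b * π (Δ n)‖ + ‖π b * π (Δ n)‖ := by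
        rw [hb, sub_mul]; exact norm_sub_le _ _
    _ ≤ (‖σ b ξ‖ + ε / 2) + (‖σ b ξ‖ + ε / 2) := by
        rw [← map_mul]
        exact add_le_add hΦn.le ((NonUnitalStarAlgHom.norm_apply_le π _).trans hπn.le)
    _ = 2 * ‖σ b ξ‖ + ε := by ring

end IsCharacteristicSequence

end Characteristic

theorem Metric.infDist_image_eq_sInf {A E F : Type*} [AddGroup A] [SeminormedAddCommGroup E]
    [FunLike F A E] [AddMonoidHomClass F A E] (f : F) (S : Set A) (a : A) :
    Metric.infDist (f a) (f '' S) = sInf {r : ℝ | ∃ s ∈ S, r = ‖f (a - s)‖} := by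
  rw [Metric.infDist_eq_iInf, ← sInf_image']
  congr 1
  ext r
  constructor
  · rintro ⟨_, ⟨s, hs, rfl⟩, rfl⟩
    exact ⟨s, hs, by rw [dist_eq_norm, map_sub]⟩
  · rintro ⟨s, hs, rfl⟩
    exact ⟨f s, ⟨s, hs, rfl⟩, by rw [dist_eq_norm, map_sub]⟩

theorem stmt13_general {A : Type*} [CStarAlgebra A]
    {H : Type*} [NormedAddCommGroup H] [InnerProductSpace ℂ H] [CompleteSpace H]
    (S : Submodule ℂ A)
    (π : A →⋆ₐ[ℂ] (H →L[ℂ] H)) (Φ : A →L[ℂ] (H →L[ℂ] H)) (hΦ : IsUCP Φ)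
    (hagree : ∀ s ∈ S, Φ s = π s)
    (ψ : A →L[ℂ] ℂ) (Δ : ℕ → A)
    (hΔ : IsCharacteristicSequence ψ Δ) (hΔS : ∀ n, Δ n ∈ S)
    (Hψ : Type*) [NormedAddCommGroup Hψ] [InnerProductSpace ℂ Hψ] [CompleteSpace Hψ]
    (σ : A →⋆ₐ[ℂ] (Hψ →L[ℂ] Hψ)) (ξ : Hψ) (hξ : ‖ξ‖ = 1)
    (hGNS : ∀ a : A, ψ a = ⟪ξ, σ a ξ⟫_ℂ) :
    ∀ a : A,
      limsup (fun n => ‖(Φ a - π a) * π (Δ n)‖) atTop ≤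
        2 * Metric.infDist (σ a) ((fun s => σ s) '' (S : Set A)) ∧
      Metric.infDist (σ a) ((fun s => σ s) '' (S : Set A)) =
        sInf {r : ℝ | ∃ s ∈ S, r = ‖σ (a - s)‖} := by
  intro a
  have hne : ((fun s => σ s) '' (S : Set A)).Nonempty := ⟨σ 0, 0, S.zero_mem, rfl⟩
  refine ⟨?_, Metric.infDist_image_eq_sInf σ (S : Set A) a⟩
  rw [← div_le_iff₀' two_pos, Metric.le_infDist hne]
  rintro _ ⟨s, hs, rfl⟩
  rw [div_le_iff₀' two_pos, dist_eq_norm, ← map_sub]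
  calc limsup (fun n => ‖(Φ a - π a) * π (Δ n)‖) atTop ≤ 2 * ‖σ (a - s) ξ‖ :=
        hΔ.limsup_norm_sub_mul_le hGNS hξ hΦ (fun n => hagree _ (hΔS n)) (hagree s hs)
    _ ≤ 2 * ‖σ (a - s)‖ := by
        gcongr
        simpa [hξ] using (σ (a - s)).le_opNorm ξ

/-- with `π`, `Φ`, `ψ`, `(Δ n)` as in the local hyperrigidity setup and
`(σ, Hσ, ξσ)` a GNS triple for `ψ`, for every `a ∈ A` one has
`limsup ‖(Φ a - π a) * π (Δ n)‖ ≤ 2 ⬝ dist(σ a, σ(S))`. -/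
theorem stmt13 {A : Type*} [CStarAlgebra A]
    {H : Type*} [NormedAddCommGroup H] [InnerProductSpace ℂ H] [CompleteSpace H]
    (S : Submodule ℂ A) (hS1 : (1 : A) ∈ S) (hSstar : ∀ x ∈ S, star x ∈ S)
    (π : A →⋆ₐ[ℂ] (H →L[ℂ] H)) (Φ : A →L[ℂ] (H →L[ℂ] H)) (hΦ : IsUCP Φ)
    (hagree : ∀ s ∈ S, Φ s = π s)
    (ψ : A →L[ℂ] ℂ) (hψ : IsState ψ) (Δ : ℕ → A)
    (hΔ : IsCharacteristicSequence ψ Δ) (hΔS : ∀ n, Δ n ∈ S)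
    (Hψ : Type*) [NormedAddCommGroup Hψ] [InnerProductSpace ℂ Hψ] [CompleteSpace Hψ]
    (σ : A →⋆ₐ[ℂ] (Hψ →L[ℂ] Hψ)) (ξ : Hψ) (hξ : ‖ξ‖ = 1)
    (hcyclic : Dense (Set.range fun a : A => σ a ξ))
    (hGNS : ∀ a : A, ψ a = ⟪ξ, σ a ξ⟫_ℂ) :
    ∀ a : A,
      limsup (fun n => ‖(Φ a - π a) * π (Δ n)‖) atTop ≤
        2 * Metric.infDist (σ a) ((fun s => σ s) '' (S : Set A)) ∧
      Metric.infDist (σ a) ((fun s => σ s) '' (S : Set A)) =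
        sInf {r : ℝ | ∃ s ∈ S, r = ‖σ (a - s)‖} :=
  stmt13_general S π Φ hΦ hagree ψ Δ hΔ hΔS Hψ σ ξ hξ hGNS
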